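/- For every integer n ≥ 4, the total unsigned row sum of the Matsunaga numbers satisfies P_n(1)/n! = Σ_{j=0}^{n−2} (−1)^j β_{n−j}, and this quantity also equals Σ_{j=0}^{n−1} (−1)^j (j+1) B_{n−1−j} + (−1)^n · n. -/

import Mathlib

open Finset

/-- A set partition of `Fin n`: a finite family of nonempty blocks such that
every element lies in exactly one block. -/
def IsSetPartition {n : ℕ} (P : Finset (Finset (Fin n))) : Prop :=
  (∀ B ∈ P, B.Nonempty) ∧ ∀ x : Fin n, ∃! B, B ∈ P ∧ x ∈ B

/-- The Bell number `B n`: the number of set partitions of an `n`-element set. -/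
noncomputable def bell (n : ℕ) : ℕ :=
  Nat.card {P : Finset (Finset (Fin n)) // IsSetPartition P}

/-- `beta n`: the number of set partitions of an `n`-element set with no singleton blocks. -/
noncomputable def beta (n : ℕ) : ℕ :=
  Nat.card {P : Finset (Finset (Fin n)) // IsSetPartition P ∧ ∀ B ∈ P, 2 ≤ B.card}

/-- Signed Stirling numbers of the first kind, defined by
`∑ k, stirS n k * z ^ k = z (z-1) ⋯ (z-n+1)`. -/
def stirS : ℕ → ℕ → ℤ
  | 0, 0 => 1
  | 0, _ + 1 => 0
  | _ + 1, 0 => 0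
  | n + 1, k + 1 => stirS n k - (n : ℤ) * stirS n (k + 1)

/-- Unsigned Stirling numbers of the first kind (number of permutations of `n`
elements with `k` cycles). -/
def stirU : ℕ → ℕ → ℕ
  | 0, 0 => 1
  | 0, _ + 1 => 0
  | _ + 1, 0 => 0
  | n + 1, k + 1 => stirU n k + n * stirU n (k + 1)

/-- The Matsunaga numbers `M n k`, defined by the recurrence
`M n k = n * M (n-1) k + beta n * stirS n k` for `1 ≤ k ≤ n`, and `0` whenever
`n ≤ 1`, `k ≤ 0` or `k > n`. -/
noncomputable def matsunaga : ℕ → ℕ → ℤ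
  | 0, _ => 0
  | 1, _ => 0
  | n + 2, k =>
      if 1 ≤ k ∧ k ≤ n + 2 then
        ((n : ℤ) + 2) * matsunaga (n + 1) k + (beta (n + 2) : ℤ) * stirS (n + 2) k
      else 0


instance {n : ℕ} : DecidablePred (@IsSetPartition n) := fun P => by
  unfold IsSetPartition ExistsUnique; infer_instance

lemma isPart_iff {n} {P : Finset (Finset (Fin n))} :
    IsSetPartition P ↔ (∀ B ∈ P, B.Nonempty) ∧ (∀ x, ∃ B ∈ P, x ∈ B) ∧
      ∀ B ∈ P, ∀ C ∈ P, ∀ x : Fin n, x ∈ B → x ∈ C → B = C := by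
  constructor
  · rintro ⟨h1, h2⟩
    refine ⟨h1, fun x => ?_, fun B hB C hC x hxB hxC => ?_⟩
    · obtain ⟨B, ⟨hB, hx⟩, -⟩ := h2 x; exact ⟨B, hB, hx⟩
    · obtain ⟨D, -, hu⟩ := h2 x
      rw [hu B ⟨hB, hxB⟩, hu C ⟨hC, hxC⟩]
  · rintro ⟨h1, h2, h3⟩
    refine ⟨h1, fun x => ?_⟩
    obtain ⟨B, hB, hx⟩ := h2 x
    exact ⟨B, ⟨hB, hx⟩, fun C ⟨hC, hxC⟩ => h3 C hC B hB x hxC hx⟩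

noncomputable def blockOf {n} (P : Finset (Finset (Fin n))) (hP : IsSetPartition P)
    (x : Fin n) : Finset (Fin n) :=
  (hP.2 x).exists.choose

lemma blockOf_mem {n} {P : Finset (Finset (Fin n))} (hP : IsSetPartition P) (x : Fin n) :
    blockOf P hP x ∈ P := (hP.2 x).exists.choose_spec.1

lemma mem_blockOf {n} {P : Finset (Finset (Fin n))} (hP : IsSetPartition P) (x : Fin n) :
    x ∈ blockOf P hP x := (hP.2 x).exists.choose_spec.2

lemma blockOf_eq {n} {P : Finset (Finset (Fin n))} (hP : IsSetPartition P) {x : Fin n}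
    {B : Finset (Fin n)} (hB : B ∈ P) (hx : x ∈ B) : B = blockOf P hP x := by
  obtain ⟨D, hD, hu⟩ := hP.2 x
  rw [hu B ⟨hB, hx⟩, hu _ ⟨blockOf_mem hP x, mem_blockOf hP x⟩]

lemma part_disj {n} {P : Finset (Finset (Fin n))} (hP : IsSetPartition P)
    {B C : Finset (Fin n)} (hB : B ∈ P) (hC : C ∈ P) {x : Fin n}
    (hxB : x ∈ B) (hxC : x ∈ C) : B = C := by
  rw [blockOf_eq hP hB hxB, blockOf_eq hP hC hxC]

section Explode
variable {n : ℕ}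

def explodeF (Q : Finset (Finset (Fin n))) (C : Finset (Fin n)) : Finset (Finset (Fin n)) :=
  (Q.erase C) ∪ C.image (fun x => ({x} : Finset (Fin n)))

def mergeF (R : Finset (Finset (Fin n))) : Finset (Finset (Fin n)) :=
  insert (univ.filter fun x => ({x} : Finset (Fin n)) ∈ R) (R.filter (fun B => 2 ≤ B.card))

def singElems (R : Finset (Finset (Fin n))) : Finset (Fin n) :=
  univ.filter fun x => ({x} : Finset (Fin n)) ∈ R

lemma mem_singElems {R : Finset (Finset (Fin n))} {x : Fin n} :
    x ∈ singElems R ↔ ({x} : Finset (Fin n)) ∈ R := by simp [singElems]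

lemma singElems_NS {Q : Finset (Finset (Fin n))} (hNS : ∀ B ∈ Q, 2 ≤ B.card) :
    singElems Q = ∅ := by
  ext x
  simp only [mem_singElems, Finset.notMem_empty, iff_false]
  intro h
  have := hNS _ h
  simp at this

lemma explode_isPart {Q : Finset (Finset (Fin n))} (hQ : IsSetPartition Q)
    {C : Finset (Fin n)} (hC : C ∈ Q) : IsSetPartition (explodeF Q C) := by
  rw [isPart_iff]
  refine ⟨?_, ?_, ?_⟩
  · intro B hB
    rcases Finset.mem_union.1 hB with h | h
    · exact hQ.1 _ (Finset.mem_of_mem_erase h)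
    · obtain ⟨x, -, rfl⟩ := Finset.mem_image.1 h
      exact ⟨x, Finset.mem_singleton_self x⟩
  · intro x
    obtain ⟨B, ⟨hB, hxB⟩, -⟩ := hQ.2 x
    by_cases hBC : B = C
    · exact ⟨{x}, Finset.mem_union_right _ (Finset.mem_image_of_mem _ (hBC ▸ hxB)),
        Finset.mem_singleton_self x⟩
    · exact ⟨B, Finset.mem_union_left _ (Finset.mem_erase.2 ⟨hBC, hB⟩), hxB⟩
  · intro B hB D hD x hxB hxD
    rcases Finset.mem_union.1 hB with h1 | h1 <;> rcases Finset.mem_union.1 hD with h2 | h2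
    · exact part_disj hQ (Finset.mem_of_mem_erase h1) (Finset.mem_of_mem_erase h2) hxB hxD
    · obtain ⟨y, hy, rfl⟩ := Finset.mem_image.1 h2
      rw [Finset.mem_singleton] at hxD; subst hxD
      have : B = C := part_disj hQ (Finset.mem_of_mem_erase h1) hC hxB hy
      exact absurd this (Finset.mem_erase.1 h1).1
    · obtain ⟨y, hy, rfl⟩ := Finset.mem_image.1 h1
      rw [Finset.mem_singleton] at hxB; subst hxB
      have : D = C := part_disj hQ (Finset.mem_of_mem_erase h2) hC hxD hy
      exact absurd this (Finset.mem_erase.1 h2).1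
    · obtain ⟨y, hy, rfl⟩ := Finset.mem_image.1 h1
      obtain ⟨z, hz, rfl⟩ := Finset.mem_image.1 h2
      rw [Finset.mem_singleton] at hxB hxD
      rw [← hxB, ← hxD]

lemma singElems_explode {Q : Finset (Finset (Fin n))} (hNS : ∀ B ∈ Q, 2 ≤ B.card)
    {C : Finset (Fin n)} : singElems (explodeF Q C) = C := by
  ext x
  simp only [mem_singElems, explodeF, Finset.mem_union, Finset.mem_erase, Finset.mem_image]
  constructor
  · rintro (⟨-, h⟩ | ⟨y, hy, h⟩)
    · have := hNS _ h; simp at this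
    · rw [Finset.singleton_inj] at h; exact h ▸ hy
  · intro hx; exact Or.inr ⟨x, hx, rfl⟩

lemma merge_explode {Q : Finset (Finset (Fin n))} (hNS : ∀ B ∈ Q, 2 ≤ B.card)
    {C : Finset (Fin n)} (hC : C ∈ Q) : mergeF (explodeF Q C) = Q := by
  have hsing : (univ.filter fun x => ({x} : Finset (Fin n)) ∈ explodeF Q C) = C :=
    singElems_explode hNS
  rw [mergeF, hsing]
  have hfilter : (explodeF Q C).filter (fun B => 2 ≤ B.card) = Q.erase C := by
    rw [explodeF, Finset.filter_union]
    have h1 : (Q.erase C).filter (fun B => 2 ≤ B.card) = Q.erase C :=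
      Finset.filter_true_of_mem (fun B hB => hNS _ (Finset.mem_of_mem_erase hB))
    have h2 : (C.image (fun x => ({x} : Finset (Fin n)))).filter (fun B => 2 ≤ B.card) = ∅ := by
      rw [Finset.filter_eq_empty_iff]
      rintro B hB
      obtain ⟨y, -, rfl⟩ := Finset.mem_image.1 hB
      simp
    rw [h1, h2, Finset.union_empty]
  rw [hfilter, Finset.insert_erase hC]

end Explode

section Inject3
variable {n : ℕ}

/-- The special partition `{{2}, univ \ {2}}` used for the exceptional case. -/
def specialP (hn : 3 ≤ n) : Finset (Finset (Fin n)) :=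
  {{⟨2, by omega⟩}, univ \ {⟨2, by omega⟩}}

lemma specialP_isPart (hn : 3 ≤ n) : IsSetPartition (specialP hn) := by
  have h0 : ((⟨0, by omega⟩ : Fin n)) ∈ univ \ ({⟨2, by omega⟩} : Finset (Fin n)) := by
    simp [Fin.ext_iff]
  rw [isPart_iff]
  refine ⟨?_, ?_, ?_⟩
  · intro B hB
    rcases Finset.mem_insert.1 hB with rfl | hB
    · exact ⟨_, Finset.mem_singleton_self _⟩
    · rw [Finset.mem_singleton] at hB; subst hB
      exact ⟨_, h0⟩
  · intro x
    by_cases hx : x = ⟨2, by omega⟩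
    · exact ⟨_, Finset.mem_insert_self _ _, by simp [hx]⟩
    · refine ⟨univ \ {⟨2, by omega⟩}, ?_, by simp [hx]⟩
      exact Finset.mem_insert_of_mem (Finset.mem_singleton_self _)
  · intro B hB C hC x hxB hxC
    rcases Finset.mem_insert.1 hB with rfl | hB <;> rcases Finset.mem_insert.1 hC with rfl | hC
    · rfl
    · rw [Finset.mem_singleton] at hC; subst hC
      rw [Finset.mem_singleton] at hxB
      simp [hxB] at hxC
    · rw [Finset.mem_singleton] at hB; subst hB
      rw [Finset.mem_singleton] at hxC
      simp [hxC] at hxB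
    · rw [Finset.mem_singleton] at hB hC; rw [hB, hC]

lemma singElems_specialP (hn : 3 ≤ n) :
    singElems (specialP hn) = {(⟨2, by omega⟩ : Fin n)} := by
  have hcard : (univ \ ({⟨2, by omega⟩} : Finset (Fin n))).card = n - 1 := by
    rw [Finset.card_sdiff_of_subset (by simp)]; simp
  ext x
  simp only [mem_singElems, specialP, Finset.mem_insert, Finset.mem_singleton,
    Finset.singleton_inj]
  constructor
  · rintro (h | h)
    · exact h
    · exfalso
      have := congrArg Finset.card h
      rw [Finset.card_singleton, hcard] at this
      omega
  · intro h; exact Or.inl h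

/-- encode for the 3-fold injection -/
noncomputable def encode3 (hn : 3 ≤ n)
    (p : Fin 3 × {P : Finset (Finset (Fin n)) // IsSetPartition P ∧ ∀ B ∈ P, 2 ≤ B.card}) :
    Finset (Finset (Fin n)) :=
  let Q := p.2.1
  let hQ := p.2.2.1
  if p.1 = 0 then Q
  else if p.1 = 1 then explodeF Q (blockOf Q hQ ⟨0, by omega⟩)
  else
    if h : (univ \ blockOf Q hQ ⟨0, by omega⟩).Nonempty then
      explodeF Q (blockOf Q hQ ((univ \ blockOf Q hQ ⟨0, by omega⟩).min' h))
    else specialP hn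

lemma encode3_isPart (hn : 3 ≤ n) (p) : IsSetPartition (encode3 hn p) := by
  obtain ⟨b, Q, hQ, hNS⟩ := p
  unfold encode3
  dsimp only
  split_ifs with h1 h2 h3
  · exact hQ
  · exact explode_isPart hQ (blockOf_mem hQ _)
  · exact explode_isPart hQ (blockOf_mem hQ _)
  · exact specialP_isPart hn

noncomputable def decode3 (hn : 3 ≤ n) (R : Finset (Finset (Fin n))) :
    Fin 3 × Finset (Finset (Fin n)) :=
  if singElems R = ∅ then (0, R)
  else if (⟨0, by omega⟩ : Fin n) ∈ singElems R then (1, mergeF R)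
  else if R = specialP hn then (2, {univ})
  else (2, mergeF R)

lemma decode3_encode3 (hn : 3 ≤ n) (p) :
    decode3 hn (encode3 hn p) = (p.1, p.2.1) := by
  obtain ⟨b, Q, hQ, hNS⟩ := p
  have hzero : (⟨0, by omega⟩ : Fin n) ∈ blockOf Q hQ ⟨0, by omega⟩ := mem_blockOf hQ _
  unfold encode3
  dsimp only
  split_ifs with h1 h2 h3
  · -- b = 0
    rw [decode3, if_pos (singElems_NS hNS), h1]
  · -- b = 1
    rw [decode3]
    have hs : singElems (explodeF Q (blockOf Q hQ ⟨0, by omega⟩)) = blockOf Q hQ ⟨0, by omega⟩ :=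
      singElems_explode hNS
    rw [hs]
    rw [if_neg (by intro h; rw [h] at hzero; exact absurd hzero (Finset.notMem_empty _)),
      if_pos hzero, merge_explode hNS (blockOf_mem hQ _), h2]
  · -- b = 2, normal case
    rw [decode3]
    set y := (univ \ blockOf Q hQ ⟨0, by omega⟩).min' h3 with hy
    have hymem : y ∈ univ \ blockOf Q hQ ⟨0, by omega⟩ := Finset.min'_mem _ _
    have hynot : y ∉ blockOf Q hQ ⟨0, by omega⟩ := (Finset.mem_sdiff.1 hymem).2
    set C := blockOf Q hQ y with hC
    have hCmem : C ∈ Q := blockOf_mem hQ y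
    have hyC : y ∈ C := mem_blockOf hQ y
    have hs : singElems (explodeF Q C) = C := singElems_explode hNS
    have hCne : C.Nonempty := ⟨y, hyC⟩
    have h0C : (⟨0, by omega⟩ : Fin n) ∉ C := by
      intro h0
      have : C = blockOf Q hQ ⟨0, by omega⟩ := blockOf_eq hQ hCmem h0
      exact hynot (this ▸ hyC)
    rw [hs, if_neg (by intro h; rw [h] at hCne; exact Finset.not_nonempty_empty hCne),
      if_neg h0C]
    have hRne : explodeF Q C ≠ specialP hn := by
      intro h
      have := singElems_explode hNS (Q := Q) (C := C)
      rw [h, singElems_specialP hn] at this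
      have h2le := hNS _ hCmem
      rw [← this] at h2le
      simp at h2le
    rw [if_neg hRne, merge_explode hNS hCmem]
    have : b = 2 := by omega
    rw [this]
  · -- b = 2, special case : Q = {univ}
    have hQuniv : Q = {univ} := by
      rw [Finset.not_nonempty_iff_eq_empty, Finset.sdiff_eq_empty_iff_subset] at h3
      have huniv : blockOf Q hQ ⟨0, by omega⟩ = univ :=
        Finset.eq_univ_of_forall (fun x => h3 (Finset.mem_univ x))
      ext B
      simp only [Finset.mem_singleton]
      constructor
      · intro hB
        obtain ⟨x, hx⟩ := hQ.1 B hB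
        have : B = blockOf Q hQ ⟨0, by omega⟩ :=
          part_disj hQ hB (blockOf_mem hQ _) hx (huniv ▸ Finset.mem_univ x)
        rw [this, huniv]
      · intro hB
        rw [hB, ← huniv]
        exact blockOf_mem hQ _
    rw [decode3]
    have hs := singElems_specialP hn
    have h2ne : ({(⟨2, by omega⟩ : Fin n)} : Finset (Fin n)) ≠ ∅ := by simp
    have h0notin : (⟨0, by omega⟩ : Fin n) ∉ ({(⟨2, by omega⟩ : Fin n)} : Finset (Fin n)) := by
      simp [Fin.ext_iff]
    rw [hs, if_neg h2ne, if_neg h0notin, if_pos rfl]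
    have : b = 2 := by omega
    rw [this, hQuniv]

lemma three_beta_le_bell (hn : 3 ≤ n) : 3 * beta n ≤ bell n := by
  classical
  have hinj : Function.Injective (fun p =>
      (⟨encode3 hn p, encode3_isPart hn p⟩ :
        {P : Finset (Finset (Fin n)) // IsSetPartition P})) := by
    intro p q h
    have h' : encode3 hn p = encode3 hn q := congrArg Subtype.val h
    have := congrArg (decode3 hn) h'
    rw [decode3_encode3, decode3_encode3] at this
    obtain ⟨b, Q, hQ⟩ := p
    obtain ⟨c, R, hR⟩ := q
    simp only [Prod.mk.injEq] at this
    simp [Prod.ext_iff, Subtype.ext_iff, this.1, this.2]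
  calc 3 * beta n
      = Nat.card (Fin 3 × {P : Finset (Finset (Fin n)) // IsSetPartition P ∧
          ∀ B ∈ P, 2 ≤ B.card}) := by
        rw [Nat.card_prod, Nat.card_eq_fintype_card (α := Fin 3), Fintype.card_fin, beta]
    _ ≤ bell n := Nat.card_le_card_of_injective _ hinj

end Inject3

section MainBij
variable {m : ℕ}

def csE : Fin m ↪ Fin (m + 1) := ⟨Fin.castSucc, Fin.castSucc_injective m⟩

def pb (B : Finset (Fin (m + 1))) : Finset (Fin m) :=
  univ.filter fun x => x.castSucc ∈ B

lemma mem_pb {B : Finset (Fin (m + 1))} {x : Fin m} : x ∈ pb B ↔ x.castSucc ∈ B := by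
  simp [pb]

lemma pb_map {B : Finset (Fin m)} : pb (B.map csE) = B := by
  ext x
  simp only [mem_pb, Finset.mem_map]
  constructor
  · rintro ⟨y, hy, hxy⟩
    have : y = x := Fin.castSucc_injective m hxy
    exact this ▸ hy
  · intro hx; exact ⟨x, hx, rfl⟩

lemma last_not_mem_map {B : Finset (Fin m)} : Fin.last m ∉ B.map csE := by
  simp only [Finset.mem_map, not_exists]
  rintro x ⟨hx, hx'⟩
  exact absurd hx' (Fin.castSucc_lt_last x).ne

lemma map_pb {B : Finset (Fin (m + 1))} : (pb B).map csE = B.erase (Fin.last m) := by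
  ext y
  simp only [Finset.mem_map, Finset.mem_erase]
  constructor
  · rintro ⟨x, hx, rfl⟩
    exact ⟨(Fin.castSucc_lt_last x).ne, mem_pb.1 hx⟩
  · rintro ⟨hy, hyB⟩
    obtain ⟨x, rfl⟩ := Fin.exists_castSucc_eq.2 hy
    exact ⟨x, mem_pb.2 hyB, rfl⟩

lemma map_pb_of_not_mem {B : Finset (Fin (m + 1))} (h : Fin.last m ∉ B) :
    (pb B).map csE = B := by
  rw [map_pb, Finset.erase_eq_of_notMem h]

lemma card_pb {B : Finset (Fin (m + 1))} (h : Fin.last m ∉ B) : (pb B).card = B.card := by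
  rw [← Finset.card_map csE, map_pb_of_not_mem h]

lemma part_split {P : Finset (Finset (Fin m))} (hP : ∀ B ∈ P, B.Nonempty) :
    (P.filter fun B => 2 ≤ B.card) ∪ (singElems P).image (fun x => ({x} : Finset (Fin m)))
      = P := by
  ext B
  simp only [Finset.mem_union, Finset.mem_filter, Finset.mem_image, mem_singElems]
  constructor
  · rintro (⟨hB, -⟩ | ⟨x, hx, rfl⟩)
    · exact hB
    · exact hx
  · intro hB
    rcases Nat.lt_or_ge B.card 2 with h | h
    · have h1 : B.card = 1 := by
        have := Finset.card_pos.2 (hP B hB)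
        omega
      obtain ⟨x, rfl⟩ := Finset.card_eq_one.1 h1
      exact Or.inr ⟨x, hB, rfl⟩
    · exact Or.inl ⟨hB, h⟩

/-- `fUp P`: merge the singletons of `P` with the new element `last`. -/
def fUp (P : Finset (Finset (Fin m))) : Finset (Finset (Fin (m + 1))) :=
  insert (insert (Fin.last m) ((singElems P).map csE))
    ((P.filter fun B => 2 ≤ B.card).image fun B => B.map csE)

/-- `gDown Q`: remove `last` and break its block into singletons. -/
noncomputable def gDown (Q : Finset (Finset (Fin (m + 1)))) (hQ : IsSetPartition Q) :
    Finset (Finset (Fin m)) :=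
  ((Q.erase (blockOf Q hQ (Fin.last m))).image pb) ∪
    (pb (blockOf Q hQ (Fin.last m))).image (fun x => ({x} : Finset (Fin m)))

end MainBij

section MainBij2
variable {m : ℕ}

lemma singElems_nonempty_of_not_NS {P : Finset (Finset (Fin m))} (hP : IsSetPartition P)
    (h : ¬∀ B ∈ P, 2 ≤ B.card) : (singElems P).Nonempty := by
  push_neg at h
  obtain ⟨B, hB, hcard⟩ := h
  have h1 : B.card = 1 := by
    have := Finset.card_pos.2 (hP.1 B hB)
    omega
  obtain ⟨x, rfl⟩ := Finset.card_eq_one.1 h1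
  exact ⟨x, mem_singElems.2 hB⟩

lemma fUp_isPart {P : Finset (Finset (Fin m))} (hP : IsSetPartition P)
    (hS : (singElems P).Nonempty) :
    IsSetPartition (fUp P) ∧ ∀ B ∈ fUp P, 2 ≤ B.card := by
  have hTcard : 2 ≤ (insert (Fin.last m) ((singElems P).map csE)).card := by
    rw [Finset.card_insert_of_notMem last_not_mem_map, Finset.card_map]
    have := Finset.card_pos.2 hS
    omega
  have hcards : ∀ B ∈ fUp P, 2 ≤ B.card := by
    intro B hB
    rcases Finset.mem_insert.1 hB with rfl | hB
    · exact hTcard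
    · obtain ⟨C, hC, rfl⟩ := Finset.mem_image.1 hB
      rw [Finset.card_map]
      exact (Finset.mem_filter.1 hC).2
  refine ⟨isPart_iff.2 ⟨fun B hB => Finset.card_pos.1 (by have := hcards B hB; omega), ?_, ?_⟩,
    hcards⟩
  · -- covering
    intro y
    rcases eq_or_ne y (Fin.last m) with rfl | hy
    · exact ⟨_, Finset.mem_insert_self _ _, Finset.mem_insert_self _ _⟩
    · obtain ⟨x, rfl⟩ := Fin.exists_castSucc_eq.2 hy
      obtain ⟨B, ⟨hB, hxB⟩, -⟩ := hP.2 x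
      rcases Nat.lt_or_ge B.card 2 with h | h
      · have h1 : B.card = 1 := by
          have := Finset.card_pos.2 (hP.1 B hB); omega
        obtain ⟨z, rfl⟩ := Finset.card_eq_one.1 h1
        rw [Finset.mem_singleton] at hxB; subst hxB
        refine ⟨_, Finset.mem_insert_self _ _, Finset.mem_insert_of_mem ?_⟩
        exact Finset.mem_map_of_mem csE (mem_singElems.2 hB)
      · refine ⟨B.map csE, Finset.mem_insert_of_mem ?_, Finset.mem_map_of_mem csE hxB⟩
        exact Finset.mem_image_of_mem _ (Finset.mem_filter.2 ⟨hB, h⟩)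
  · -- disjointness
    intro B hB C hC y hyB hyC
    rcases Finset.mem_insert.1 hB with rfl | hB <;> rcases Finset.mem_insert.1 hC with rfl | hC
    · rfl
    · -- B is the special block, C is a mapped block
      exfalso
      obtain ⟨D, hD, rfl⟩ := Finset.mem_image.1 hC
      obtain ⟨x, hxD, rfl⟩ := Finset.mem_map.1 hyC
      rcases Finset.mem_insert.1 hyB with h | h
      · exact (Fin.castSucc_lt_last x).ne h
      · obtain ⟨z, hz, hzx⟩ := Finset.mem_map.1 h
        have : z = x := Fin.castSucc_injective m hzx
        subst this
        have hsing : ({z} : Finset (Fin m)) ∈ P := mem_singElems.1 hz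
        have hD2 := (Finset.mem_filter.1 hD).2
        have : ({z} : Finset (Fin m)) = D :=
          part_disj hP hsing (Finset.mem_filter.1 hD).1 (Finset.mem_singleton_self z) hxD
        rw [← this] at hD2
        simp at hD2
    · exfalso
      obtain ⟨D, hD, rfl⟩ := Finset.mem_image.1 hB
      obtain ⟨x, hxD, rfl⟩ := Finset.mem_map.1 hyB
      rcases Finset.mem_insert.1 hyC with h | h
      · exact (Fin.castSucc_lt_last x).ne h
      · obtain ⟨z, hz, hzx⟩ := Finset.mem_map.1 h
        have : z = x := Fin.castSucc_injective m hzx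
        subst this
        have hsing : ({z} : Finset (Fin m)) ∈ P := mem_singElems.1 hz
        have hD2 := (Finset.mem_filter.1 hD).2
        have : ({z} : Finset (Fin m)) = D :=
          part_disj hP hsing (Finset.mem_filter.1 hD).1 (Finset.mem_singleton_self z) hxD
        rw [← this] at hD2
        simp at hD2
    · obtain ⟨D, hD, rfl⟩ := Finset.mem_image.1 hB
      obtain ⟨E, hE, rfl⟩ := Finset.mem_image.1 hC
      obtain ⟨x, hxD, rfl⟩ := Finset.mem_map.1 hyB
      obtain ⟨z, hzE, hzx⟩ := Finset.mem_map.1 hyC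
      have : z = x := Fin.castSucc_injective m hzx
      subst this
      have : D = E := part_disj hP (Finset.mem_filter.1 hD).1 (Finset.mem_filter.1 hE).1 hxD hzE
      rw [this]

lemma gDown_isPart {Q : Finset (Finset (Fin (m + 1)))} (hQ : IsSetPartition Q) :
    IsSetPartition (gDown Q hQ) := by
  set L := blockOf Q hQ (Fin.last m) with hL
  have hLmem : L ∈ Q := blockOf_mem hQ _
  have hlastL : Fin.last m ∈ L := mem_blockOf hQ _
  have hlast_not : ∀ B ∈ Q.erase L, Fin.last m ∉ B := by
    intro B hB hlast
    exact (Finset.mem_erase.1 hB).1 (part_disj hQ (Finset.mem_of_mem_erase hB) hLmem hlast hlastL)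
  rw [isPart_iff]
  refine ⟨?_, ?_, ?_⟩
  · intro B hB
    rcases Finset.mem_union.1 hB with h | h
    · obtain ⟨C, hC, rfl⟩ := Finset.mem_image.1 h
      obtain ⟨z, hz⟩ := hQ.1 C (Finset.mem_of_mem_erase hC)
      have hzne : z ≠ Fin.last m := fun h' => hlast_not C hC (h' ▸ hz)
      obtain ⟨x, rfl⟩ := Fin.exists_castSucc_eq.2 hzne
      exact ⟨x, mem_pb.2 hz⟩
    · obtain ⟨x, -, rfl⟩ := Finset.mem_image.1 h
      exact ⟨x, Finset.mem_singleton_self x⟩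
  · intro x
    obtain ⟨B, ⟨hB, hxB⟩, -⟩ := hQ.2 x.castSucc
    rcases eq_or_ne B L with rfl | hne
    · exact ⟨{x}, Finset.mem_union_right _ (Finset.mem_image_of_mem _ (mem_pb.2 hxB)),
        Finset.mem_singleton_self x⟩
    · exact ⟨pb B, Finset.mem_union_left _
        (Finset.mem_image_of_mem _ (Finset.mem_erase.2 ⟨hne, hB⟩)), mem_pb.2 hxB⟩
  · intro B hB C hC x hxB hxC
    rcases Finset.mem_union.1 hB with h1 | h1 <;> rcases Finset.mem_union.1 hC with h2 | h2
    · obtain ⟨D, hD, rfl⟩ := Finset.mem_image.1 h1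
      obtain ⟨E, hE, rfl⟩ := Finset.mem_image.1 h2
      have : D = E := part_disj hQ (Finset.mem_of_mem_erase hD) (Finset.mem_of_mem_erase hE)
        (mem_pb.1 hxB) (mem_pb.1 hxC)
      rw [this]
    · exfalso
      obtain ⟨D, hD, rfl⟩ := Finset.mem_image.1 h1
      obtain ⟨y, hy, rfl⟩ := Finset.mem_image.1 h2
      rw [Finset.mem_singleton] at hxC; subst hxC
      have : D = L := part_disj hQ (Finset.mem_of_mem_erase hD) hLmem (mem_pb.1 hxB) (mem_pb.1 hy)
      exact (Finset.mem_erase.1 hD).1 this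
    · exfalso
      obtain ⟨D, hD, rfl⟩ := Finset.mem_image.1 h2
      obtain ⟨y, hy, rfl⟩ := Finset.mem_image.1 h1
      rw [Finset.mem_singleton] at hxB; subst hxB
      have : D = L := part_disj hQ (Finset.mem_of_mem_erase hD) hLmem (mem_pb.1 hxC) (mem_pb.1 hy)
      exact (Finset.mem_erase.1 hD).1 this
    · obtain ⟨y, hy, rfl⟩ := Finset.mem_image.1 h1
      obtain ⟨z, hz, rfl⟩ := Finset.mem_image.1 h2
      rw [Finset.mem_singleton] at hxB hxC
      rw [← hxB, ← hxC]

end MainBij2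

section MainBij3
variable {m : ℕ}

lemma gDown_fUp {P : Finset (Finset (Fin m))} (hP : IsSetPartition P)
    (hS : (singElems P).Nonempty) (hfP : IsSetPartition (fUp P)) :
    gDown (fUp P) hfP = P := by
  set T : Finset (Fin (m+1)) := insert (Fin.last m) ((singElems P).map csE) with hT
  have hTmem : T ∈ fUp P := Finset.mem_insert_self _ _
  have hlastT : Fin.last m ∈ T := Finset.mem_insert_self _ _
  have hLT : blockOf (fUp P) hfP (Fin.last m) = T :=
    (blockOf_eq hfP hTmem hlastT).symm
  have hTnotim : T ∉ (P.filter fun B => 2 ≤ B.card).image (fun B => B.map csE) := by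
    intro h
    obtain ⟨D, -, hD⟩ := Finset.mem_image.1 h
    rw [← hD] at hlastT
    exact last_not_mem_map hlastT
  have herase : (fUp P).erase T = (P.filter fun B => 2 ≤ B.card).image (fun B => B.map csE) := by
    rw [fUp, ← hT, Finset.erase_insert hTnotim]
  have hpbT : pb T = singElems P := by
    ext x
    rw [mem_pb, hT, Finset.mem_insert]
    constructor
    · rintro (h | h)
      · exact absurd h (Fin.castSucc_lt_last x).ne
      · obtain ⟨z, hz, hzx⟩ := Finset.mem_map.1 h
        have : z = x := Fin.castSucc_injective m hzx
        exact this ▸ hz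
    · intro h; exact Or.inr (Finset.mem_map_of_mem csE h)
  rw [gDown, hLT, herase, hpbT, Finset.image_image]
  have h9 : ((P.filter fun B => 2 ≤ B.card).image (pb ∘ fun B => B.map csE))
      = P.filter fun B => 2 ≤ B.card := by
    ext B
    simp only [Finset.mem_image, Function.comp_apply, pb_map]
    constructor
    · rintro ⟨C, hC, rfl⟩; exact hC
    · intro hB; exact ⟨B, hB, rfl⟩
  rw [h9, part_split hP.1]

lemma gDown_has_singleton {Q : Finset (Finset (Fin (m + 1)))} (hQ : IsSetPartition Q)
    (hNS : ∀ B ∈ Q, 2 ≤ B.card) : ¬∀ B ∈ gDown Q hQ, 2 ≤ B.card := by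
  set L := blockOf Q hQ (Fin.last m) with hL
  have hLmem : L ∈ Q := blockOf_mem hQ _
  have hlastL : Fin.last m ∈ L := mem_blockOf hQ _
  have hcardL : 1 < L.card := by have := hNS L hLmem; omega
  obtain ⟨z, hz, hzne⟩ := Finset.exists_mem_ne hcardL (Fin.last m)
  obtain ⟨x, rfl⟩ := Fin.exists_castSucc_eq.2 hzne
  intro h
  have hmem : ({x} : Finset (Fin m)) ∈ gDown Q hQ :=
    Finset.mem_union_right _ (Finset.mem_image_of_mem _ (mem_pb.2 hz))
  have := h _ hmem
  simp at this

lemma fUp_gDown {Q : Finset (Finset (Fin (m + 1)))} (hQ : IsSetPartition Q)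
    (hNS : ∀ B ∈ Q, 2 ≤ B.card) : fUp (gDown Q hQ) = Q := by
  set L := blockOf Q hQ (Fin.last m) with hL
  have hLmem : L ∈ Q := blockOf_mem hQ _
  have hlastL : Fin.last m ∈ L := mem_blockOf hQ _
  have hlast_not : ∀ B ∈ Q.erase L, Fin.last m ∉ B := by
    intro B hB hlast
    exact (Finset.mem_erase.1 hB).1 (part_disj hQ (Finset.mem_of_mem_erase hB) hLmem hlast hlastL)
  -- singletons of gDown Q = pb L
  have hsing : singElems (gDown Q hQ) = pb L := by
    ext x
    rw [mem_singElems, gDown, Finset.mem_union]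
    constructor
    · rintro (h | h)
      · exfalso
        obtain ⟨D, hD, hDx⟩ := Finset.mem_image.1 h
        have hcard := hNS D (Finset.mem_of_mem_erase hD)
        have : (pb D).card = D.card := card_pb (hlast_not D hD)
        rw [hDx] at this
        simp only [Finset.card_singleton] at this
        omega
      · obtain ⟨y, hy, hyx⟩ := Finset.mem_image.1 h
        rw [Finset.singleton_inj] at hyx
        exact hyx ▸ hy
    · intro h
      exact Or.inr (Finset.mem_image_of_mem _ h)
  -- filter of gDown Q
  have hfilt : (gDown Q hQ).filter (fun B => 2 ≤ B.card) = (Q.erase L).image pb := by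
    rw [gDown, Finset.filter_union]
    have h1 : ((Q.erase L).image pb).filter (fun B => 2 ≤ B.card) = (Q.erase L).image pb := by
      apply Finset.filter_true_of_mem
      intro B hB
      obtain ⟨D, hD, rfl⟩ := Finset.mem_image.1 hB
      rw [card_pb (hlast_not D hD)]
      exact hNS D (Finset.mem_of_mem_erase hD)
    have h2 : ((pb L).image (fun x => ({x} : Finset (Fin m)))).filter (fun B => 2 ≤ B.card)
        = ∅ := by
      rw [Finset.filter_eq_empty_iff]
      intro B hB
      obtain ⟨y, -, rfl⟩ := Finset.mem_image.1 hB
      simp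
    rw [h1, h2, Finset.union_empty]
  rw [fUp, hsing, hfilt, Finset.image_image]
  have him : ((Q.erase L).image ((fun B => Finset.map csE B) ∘ pb)) = Q.erase L := by
    ext B
    simp only [Finset.mem_image, Function.comp_apply]
    constructor
    · rintro ⟨C, hC, rfl⟩
      rw [map_pb_of_not_mem (hlast_not C hC)]; exact hC
    · intro hB
      exact ⟨B, hB, map_pb_of_not_mem (hlast_not B hB)⟩
  have hinsL : insert (Fin.last m) ((pb L).map csE) = L := by
    rw [map_pb, Finset.insert_erase hlastL]
  rw [him, hinsL, Finset.insert_erase hLmem]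

end MainBij3

noncomputable def partEquiv (m : ℕ) :
    {P : Finset (Finset (Fin m)) // IsSetPartition P} ≃
      ({Q : Finset (Finset (Fin m)) // IsSetPartition Q ∧ ∀ B ∈ Q, 2 ≤ B.card} ⊕
       {Q : Finset (Finset (Fin (m + 1))) // IsSetPartition Q ∧ ∀ B ∈ Q, 2 ≤ B.card}) where
  toFun P :=
    if h : ∀ B ∈ P.1, 2 ≤ B.card then Sum.inl ⟨P.1, P.2, h⟩
    else Sum.inr ⟨fUp P.1,
      (fUp_isPart P.2 (singElems_nonempty_of_not_NS P.2 h)).1,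
      (fUp_isPart P.2 (singElems_nonempty_of_not_NS P.2 h)).2⟩
  invFun Q :=
    match Q with
    | Sum.inl Q => ⟨Q.1, Q.2.1⟩
    | Sum.inr Q => ⟨gDown Q.1 Q.2.1, gDown_isPart Q.2.1⟩
  left_inv P := by
    by_cases h : ∀ B ∈ P.1, 2 ≤ B.card
    · simp only [dif_pos h]
    · simp only [dif_neg h]
      exact Subtype.ext (gDown_fUp P.2 (singElems_nonempty_of_not_NS P.2 h) _)
  right_inv Q := by
    match Q with
    | Sum.inl Q =>
      simp only [dif_pos Q.2.2]
    | Sum.inr Q =>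
      have h := gDown_has_singleton Q.2.1 Q.2.2
      simp only [dif_neg h]
      congr 1
      exact Subtype.ext (fUp_gDown Q.2.1 Q.2.2)

lemma bell_eq_beta_add (m : ℕ) : bell m = beta m + beta (m + 1) := by
  rw [bell, Nat.card_congr (partEquiv m), Nat.card_sum, beta, beta]


lemma beta_zero : beta 0 = 1 := by rw [beta, Nat.card_eq_fintype_card]; decide
lemma beta_one : beta 1 = 0 := by rw [beta, Nat.card_eq_fintype_card]; decide
lemma beta_two : beta 2 = 1 := by rw [beta, Nat.card_eq_fintype_card]; decide
lemma beta_three : beta 3 = 1 := by rw [beta, Nat.card_eq_fintype_card]; decide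
lemma bell_three : bell 3 = 5 := by rw [bell, Nat.card_eq_fintype_card]; decide

lemma beta_four : beta 4 = 4 := by
  have h := bell_eq_beta_add 3
  rw [bell_three, beta_three] at h
  norm_num at h
  omega

lemma two_beta_le_succ (n : ℕ) (hn : 3 ≤ n) : 2 * beta n ≤ beta (n + 1) := by
  have h1 := three_beta_le_bell hn
  have h2 := bell_eq_beta_add n
  omega

lemma beta_ge_four : ∀ n, 4 ≤ n → 4 ≤ beta n := by
  intro n hn
  induction n, hn using Nat.le_induction with
  | base =>
    have := beta_four
    omega
  | succ n hn ih =>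
    have := two_beta_le_succ n (by omega)
    omega

lemma stirU_zero_left : ∀ n, 1 ≤ n → stirU n 0 = 0 := by
  intro n hn
  match n with
  | n + 1 => rfl

lemma stirU_zero_of_lt : ∀ n k, n < k → stirU n k = 0 := by
  intro n
  induction n with
  | zero => intro k hk; match k, hk with | k + 1, _ => rfl
  | succ n ih =>
    intro k hk
    match k, hk with
    | k + 1, hk =>
      show stirU n k + n * stirU n (k + 1) = 0
      rw [ih k (by omega), ih (k + 1) (by omega)]
      ring

lemma stirS_eq : ∀ n k, stirS n k = (-1 : ℤ) ^ (n + k) * stirU n k := by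
  intro n
  induction n with
  | zero =>
    intro k
    match k with
    | 0 => simp [stirS, stirU]
    | k + 1 => simp [stirS, stirU]
  | succ n ih =>
    intro k
    match k with
    | 0 => simp [stirS, stirU]
    | k + 1 =>
      show stirS n k - (n : ℤ) * stirS n (k + 1)
          = (-1 : ℤ) ^ (n + 1 + (k + 1)) * (stirU n k + n * stirU n (k + 1) : ℕ)
      rw [ih k, ih (k + 1)]
      have hs : (-1 : ℤ) ^ (n + 1 + (k + 1)) = (-1) ^ (n + k) := by
        rw [show n + 1 + (k + 1) = n + k + 2 from by ring, pow_add]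
        norm_num
      have hs2 : (-1 : ℤ) ^ (n + (k + 1)) = -(-1) ^ (n + k) := by
        rw [show n + (k + 1) = n + k + 1 from by ring, pow_succ]
        ring
      rw [hs, hs2]
      push_cast
      ring

lemma sum_stirU : ∀ n, 1 ≤ n → ∑ k ∈ range n, stirU n (k + 1) = n.factorial := by
  intro n
  induction n with
  | zero => omega
  | succ n ih =>
    intro _
    rcases Nat.eq_zero_or_pos n with rfl | hn
    · decide
    have step : ∀ k, stirU (n + 1) (k + 1) = stirU n k + n * stirU n (k + 1) := fun k => rfl
    calc ∑ k ∈ range (n + 1), stirU (n + 1) (k + 1)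
        = ∑ k ∈ range (n + 1), (stirU n k + n * stirU n (k + 1)) := by
          exact Finset.sum_congr rfl fun k _ => step k
      _ = (∑ k ∈ range (n + 1), stirU n k) + n * ∑ k ∈ range (n + 1), stirU n (k + 1) := by
          rw [Finset.sum_add_distrib, Finset.mul_sum]
      _ = (∑ k ∈ range n, stirU n (k + 1)) + n * ∑ k ∈ range n, stirU n (k + 1) := by
          rw [Finset.sum_range_succ' (fun k => stirU n k) n, stirU_zero_left n hn,
            Finset.sum_range_succ (fun k => stirU n (k + 1)) n,
            stirU_zero_of_lt n (n + 1) (by omega)]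
          ring
      _ = n.factorial + n * n.factorial := by rw [ih hn]
      _ = (n + 1).factorial := by rw [Nat.factorial_succ]; ring

lemma stirU_succ_ge (n k : ℕ) (hk : 1 ≤ k) : n * stirU n k ≤ stirU (n + 1) k := by
  match k, hk with
  | k + 1, _ =>
    show n * stirU n (k + 1) ≤ stirU n k + n * stirU n (k + 1)
    omega

lemma six_stirU_two_le (n k : ℕ) (hn : 4 ≤ n) (hk : 1 ≤ k) : 6 * stirU 2 k ≤ stirU n k := by
  induction n with
  | zero => omega
  | succ n ih =>
    rcases Nat.lt_or_ge n 4 with h | h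
    · have hn4 : n = 3 := by omega
      subst hn4
      calc 6 * stirU 2 k = 2 * (3 * stirU 2 k) := by ring
        _ ≤ 2 * (3 * stirU 2 k) := le_refl _
        _ ≤ stirU 4 k := by
            have h1 := stirU_succ_ge 2 k hk
            have h2 := stirU_succ_ge 3 k hk
            norm_num at h1 h2
            omega
    · calc 6 * stirU 2 k ≤ stirU n k := ih h
        _ ≤ n * stirU n k := Nat.le_mul_of_pos_left _ (by omega)
        _ ≤ stirU (n + 1) k := stirU_succ_ge n k hk

lemma mats_rec (n k : ℕ) (h1 : 1 ≤ k) (h2 : k ≤ n + 2) :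
    matsunaga (n + 2) k
      = ((n : ℤ) + 2) * matsunaga (n + 1) k + (beta (n + 2) : ℤ) * stirS (n + 2) k := by
  rw [matsunaga, if_pos ⟨h1, h2⟩]

lemma mats_zero_of_gt (n k : ℕ) (h : n < k) : matsunaga n k = 0 := by
  match n with
  | 0 => rfl
  | 1 => rfl
  | n + 2 => rw [matsunaga, if_neg (by omega)]

noncomputable def Nz (n k : ℕ) : ℤ := (-1) ^ (n + k) * matsunaga n k

lemma Nz_zero_of_gt (n k : ℕ) (h : n < k) : Nz n k = 0 := by
  rw [Nz, mats_zero_of_gt n k h, mul_zero]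

lemma Nz_rec (n k : ℕ) (h1 : 1 ≤ k) (h2 : k ≤ n + 2) :
    Nz (n + 2) k = (beta (n + 2) : ℤ) * stirU (n + 2) k - ((n : ℤ) + 2) * Nz (n + 1) k := by
  rw [Nz, Nz, mats_rec n k h1 h2, stirS_eq]
  have hsq : (-1 : ℤ) ^ (n + 2 + k) * (-1) ^ (n + 2 + k) = 1 := by
    rw [← pow_add]
    exact Even.neg_one_pow ⟨n + 2 + k, by ring⟩
  have hs : (-1 : ℤ) ^ (n + 2 + k) = -(-1 : ℤ) ^ (n + 1 + k) := by
    rw [show n + 2 + k = (n + 1 + k) + 1 from by ring, pow_succ]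
    ring
  calc (-1 : ℤ) ^ (n + 2 + k) * (((n : ℤ) + 2) * matsunaga (n + 1) k
        + (beta (n + 2) : ℤ) * ((-1 : ℤ) ^ (n + 2 + k) * stirU (n + 2) k))
      = ((-1 : ℤ) ^ (n + 2 + k) * (-1 : ℤ) ^ (n + 2 + k)) * (beta (n + 2) : ℤ) * stirU (n + 2) k
        + (-1 : ℤ) ^ (n + 2 + k) * ((n : ℤ) + 2) * matsunaga (n + 1) k := by ring
    _ = (beta (n + 2) : ℤ) * stirU (n + 2) k
        - ((n : ℤ) + 2) * ((-1) ^ (n + 1 + k) * matsunaga (n + 1) k) := by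
          rw [hsq, hs]; ring

lemma mats_one (k : ℕ) : matsunaga 1 k = 0 := rfl

lemma Nz_two (k : ℕ) (hk : 1 ≤ k) : Nz 2 k = (stirU 2 k : ℤ) := by
  rcases le_or_gt k 2 with h | h
  · rw [show (2 : ℕ) = 0 + 2 from rfl, Nz_rec 0 k hk (by omega)]
    rw [Nz, mats_one, beta_two]
    push_cast
    ring
  · rw [Nz_zero_of_gt 2 k h, stirU_zero_of_lt 2 k h]
    rfl

lemma Nz_three (k : ℕ) (hk : 1 ≤ k) : Nz 3 k = (stirU 3 k : ℤ) - 3 * stirU 2 k := by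
  rcases le_or_gt k 3 with h | h
  · rw [show (3 : ℕ) = 1 + 2 from rfl, Nz_rec 1 k hk (by omega)]
    rw [Nz_two k hk, beta_three]
    push_cast
    ring
  · rw [Nz_zero_of_gt 3 k h, stirU_zero_of_lt 3 k h, stirU_zero_of_lt 2 k (by omega)]
    norm_num

lemma Nz_four (k : ℕ) (hk : 1 ≤ k) :
    Nz 4 k = 4 * (stirU 4 k : ℤ) - 4 * stirU 3 k + 12 * stirU 2 k := by
  rcases le_or_gt k 4 with h | h
  · rw [show (4 : ℕ) = 2 + 2 from rfl, Nz_rec 2 k hk (by omega)]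
    rw [Nz_three k hk, beta_four]
    push_cast
    ring
  · rw [Nz_zero_of_gt 4 k h, stirU_zero_of_lt 4 k h, stirU_zero_of_lt 3 k (by omega),
      stirU_zero_of_lt 2 k (by omega)]
    norm_num

lemma Nz_bounds : ∀ n, 4 ≤ n → ∀ k, 1 ≤ k →
    0 ≤ Nz n k ∧ Nz n k ≤ (beta n : ℤ) * stirU n k + 12 * stirU 2 k := by
  intro n hn
  induction n, hn using Nat.le_induction with
  | base =>
    intro k hk
    have h43 : 3 * stirU 3 k ≤ stirU 4 k := by
      have := stirU_succ_ge 3 k hk; norm_num at this; exact this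
    rw [Nz_four k hk, beta_four]
    constructor
    · have : (3 * stirU 3 k : ℤ) ≤ (stirU 4 k : ℤ) := by exact_mod_cast h43
      have h2 : (0 : ℤ) ≤ stirU 2 k := by positivity
      have h3 : (0 : ℤ) ≤ stirU 3 k := by positivity
      nlinarith
    · have h3 : (0 : ℤ) ≤ stirU 3 k := by positivity
      push_cast
      nlinarith
  | succ n hn ih =>
    intro k hk
    rcases Nat.lt_or_ge (n + 1) k with h | h
    · rw [Nz_zero_of_gt (n + 1) k h]
      refine ⟨le_refl 0, ?_⟩
      positivity
    · -- k ≤ n + 1, use recursion with n + 1 = (n - 1) + 2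
      obtain ⟨m, rfl⟩ : ∃ m, n = m + 1 := ⟨n - 1, by omega⟩
      rw [show m + 1 + 1 = m + 2 from rfl, Nz_rec m k hk (by omega)]
      obtain ⟨hlo, hhi⟩ := ih k hk
      have hU12 : ((m : ℤ) + 1) * stirU (m + 1) k ≤ stirU (m + 2) k := by
        have h0 := stirU_succ_ge (m + 1) k hk
        have h1 : stirU (m + 1 + 1) k = stirU (m + 2) k := rfl
        rw [h1] at h0
        exact_mod_cast h0
      have hbb : 2 * (beta (m + 1) : ℤ) ≤ beta (m + 2) := by
        exact_mod_cast two_beta_le_succ (m + 1) (by omega)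
      have hb4 : (4 : ℤ) ≤ beta (m + 1) := by exact_mod_cast beta_ge_four (m + 1) (by omega)
      have hU6 : (6 : ℤ) * stirU 2 k ≤ stirU (m + 1) k := by
        exact_mod_cast six_stirU_two_le (m + 1) k (by omega) hk
      have hU2 : (0 : ℤ) ≤ stirU 2 k := by positivity
      have hU1 : (0 : ℤ) ≤ stirU (m + 1) k := by positivity
      have hUk2 : (0 : ℤ) ≤ stirU (m + 2) k := by positivity
      have hm : (3 : ℤ) ≤ m := by exact_mod_cast (by omega : (3:ℕ) ≤ m)
      constructor
      · -- need (m+2) * Nz (m+1) k ≤ beta (m+2) * stirU (m+2) k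
        have key : ((m : ℤ) + 2) * ((beta (m + 1) : ℤ) * stirU (m + 1) k + 12 * stirU 2 k)
            ≤ (beta (m + 2) : ℤ) * stirU (m + 2) k := by
          nlinarith [mul_le_mul_of_nonneg_left hU12 (by positivity : (0:ℤ) ≤ 2 * (beta (m+1) : ℤ)),
            mul_le_mul_of_nonneg_right hbb hUk2]
        nlinarith [mul_le_mul_of_nonneg_left hhi (by positivity : (0:ℤ) ≤ (m : ℤ) + 2)]
      · nlinarith

lemma abs_mats (n k : ℕ) (hn : 4 ≤ n) (hk : 1 ≤ k) : |matsunaga n k| = Nz n k := by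
  have h1 : |Nz n k| = |matsunaga n k| := by
    rw [Nz, abs_mul, abs_pow, abs_neg, abs_one, one_pow, one_mul]
  rw [← h1, abs_of_nonneg (Nz_bounds n hn k hk).1]

noncomputable def Tsum (n : ℕ) : ℤ := ∑ k ∈ range n, Nz n (k + 1)

lemma Tsum_rec (m : ℕ) : Tsum (m + 2) = (beta (m + 2) : ℤ) * (m + 2).factorial
    - ((m : ℤ) + 2) * Tsum (m + 1) := by
  rw [Tsum]
  have h1 : ∀ k ∈ range (m + 2), Nz (m + 2) (k + 1)
      = (beta (m + 2) : ℤ) * stirU (m + 2) (k + 1) - ((m : ℤ) + 2) * Nz (m + 1) (k + 1) := by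
    intro k hk
    rw [Finset.mem_range] at hk
    exact Nz_rec m (k + 1) (by omega) (by omega)
  rw [Finset.sum_congr rfl h1, Finset.sum_sub_distrib, ← Finset.mul_sum, ← Finset.mul_sum]
  have h2 : ∑ k ∈ range (m + 2), (stirU (m + 2) (k + 1) : ℤ) = ((m + 2).factorial : ℤ) := by
    rw [← Nat.cast_sum]
    exact_mod_cast congrArg (Nat.cast : ℕ → ℤ) (sum_stirU (m + 2) (by omega))
  have h3 : ∑ k ∈ range (m + 2), Nz (m + 1) (k + 1) = Tsum (m + 1) := by
    rw [Finset.sum_range_succ, Nz_zero_of_gt (m + 1) (m + 2) (by omega), add_zero, Tsum]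
  rw [h2, h3]

lemma Tsum_four : Tsum 4 = 24 * (beta 4 : ℤ) := by
  have h3 : Tsum 3 = 0 := by
    have : Tsum 3 = (beta 3 : ℤ) * (3).factorial - 3 * Tsum 2 := by
      have := Tsum_rec 1
      norm_num at this ⊢
      convert this using 2
    have h2 : Tsum 2 = 2 := by
      rw [Tsum]
      rw [Finset.sum_range_succ, Finset.sum_range_succ, Finset.sum_range_zero]
      rw [Nz_two 1 (by omega), Nz_two 2 (by omega)]
      decide
    rw [this, h2, beta_three]
    norm_num [Nat.factorial]
  have h4 : Tsum 4 = (beta 4 : ℤ) * (4).factorial - 4 * Tsum 3 := by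
    have := Tsum_rec 2
    norm_num at this ⊢
    convert this using 2
  rw [h4, h3]
  norm_num [Nat.factorial]
  ring

noncomputable def Dz (n : ℕ) : ℤ := ∑ j ∈ range (n - 1), (-1 : ℤ) ^ j * beta (n - j)

lemma Dz_rec (n : ℕ) (hn : 2 ≤ n) : Dz (n + 1) = (beta (n + 1) : ℤ) - Dz n := by
  obtain ⟨m, rfl⟩ : ∃ m, n = m + 2 := ⟨n - 2, by omega⟩
  rw [Dz, Dz]
  have h1 : m + 2 + 1 - 1 = (m + 2 - 1) + 1 := by omega
  rw [h1, Finset.sum_range_succ' (fun j => (-1 : ℤ) ^ j * beta (m + 2 + 1 - j)) (m + 2 - 1)]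
  have h2 : ∀ j ∈ range (m + 2 - 1), (-1 : ℤ) ^ (j + 1) * beta (m + 2 + 1 - (j + 1))
      = -((-1 : ℤ) ^ j * beta (m + 2 - j)) := by
    intro j hj
    have : m + 2 + 1 - (j + 1) = m + 2 - j := by omega
    rw [this, pow_succ]
    ring
  rw [Finset.sum_congr rfl h2, Finset.sum_neg_distrib]
  simp only [pow_zero, one_mul, Nat.sub_zero]
  ring

lemma Tsum_eq (n : ℕ) (hn : 4 ≤ n) : Tsum n = (n.factorial : ℤ) * Dz n := by
  induction n, hn using Nat.le_induction with
  | base =>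
    rw [Tsum_four, Dz]
    norm_num [Finset.sum_range_succ, Nat.factorial]
    rw [beta_three, beta_two]
    push_cast
    ring
  | succ n hn ih =>
    obtain ⟨m, rfl⟩ : ∃ m, n = m + 1 := ⟨n - 1, by omega⟩
    rw [show m + 1 + 1 = m + 2 from rfl, Tsum_rec m, ih, Dz_rec (m + 1) (by omega)]
    rw [show m + 1 + 1 = m + 2 from rfl]
    have hf : ((m + 2).factorial : ℤ) = ((m : ℤ) + 2) * ((m + 1).factorial : ℤ) := by
      rw [show m + 2 = (m + 1) + 1 from rfl, Nat.factorial_succ]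
      push_cast
      ring
    rw [hf]
    ring

lemma EF (n : ℕ) (hn : 2 ≤ n) :
    (∑ j ∈ range n, (-1 : ℚ) ^ j * ((j : ℚ) + 1) * (bell (n - 1 - j) : ℚ))
        + (-1 : ℚ) ^ n * (n : ℚ)
      = ∑ j ∈ range (n - 1), (-1 : ℚ) ^ j * (beta (n - j) : ℚ) := by
  obtain ⟨m, rfl⟩ : ∃ m, n = m + 2 := ⟨n - 2, by omega⟩
  have hsub1 : ∀ j, j < m + 2 → m + 2 - 1 - j = m + 1 - j := by intro j hj; omega
  -- split bell into two betas
  have hsplit : ∀ j ∈ range (m + 2),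
      (-1 : ℚ) ^ j * ((j : ℚ) + 1) * (bell (m + 2 - 1 - j) : ℚ)
        = (-1 : ℚ) ^ j * ((j : ℚ) + 1) * (beta (m + 1 - j) : ℚ)
          + (-1 : ℚ) ^ j * ((j : ℚ) + 1) * (beta (m + 2 - j) : ℚ) := by
    intro j hj
    rw [Finset.mem_range] at hj
    rw [hsub1 j hj, bell_eq_beta_add (m + 1 - j)]
    have h2 : m + 1 - j + 1 = m + 2 - j := by omega
    rw [h2]
    push_cast
    ring
  rw [Finset.sum_congr rfl hsplit, Finset.sum_add_distrib]
  set Y := ∑ j ∈ range (m + 2), (-1 : ℚ) ^ j * ((j : ℚ) + 1) * (beta (m + 1 - j) : ℚ) with hY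
  set X := ∑ j ∈ range (m + 2), (-1 : ℚ) ^ j * ((j : ℚ) + 1) * (beta (m + 2 - j) : ℚ) with hX
  set W := ∑ j ∈ range (m + 3), (-1 : ℚ) ^ j * (j : ℚ) * (beta (m + 2 - j) : ℚ) with hW
  set V := ∑ j ∈ range (m + 3), (-1 : ℚ) ^ j * (beta (m + 2 - j) : ℚ) with hV
  set E := ∑ j ∈ range (m + 1), (-1 : ℚ) ^ j * (beta (m + 2 - j) : ℚ) with hE
  have hWY : W = -Y := by
    rw [hW, Finset.sum_range_succ' (fun j => (-1 : ℚ) ^ j * (j : ℚ) * (beta (m + 2 - j) : ℚ))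
      (m + 2)]
    have hterm : ∀ j ∈ range (m + 2),
        (fun i : ℕ => (-1 : ℚ) ^ i * (i : ℚ) * (beta (m + 2 - i) : ℚ)) (j + 1)
          = -((-1 : ℚ) ^ j * ((j : ℚ) + 1) * (beta (m + 1 - j) : ℚ)) := by
      intro j hj
      simp only
      have h2 : m + 2 - (j + 1) = m + 1 - j := by omega
      rw [h2, pow_succ]
      push_cast
      ring
    rw [Finset.sum_congr rfl hterm, Finset.sum_neg_distrib, hY]
    push_cast
    ring
  have hVXW : V + W = X + (-1 : ℚ) ^ (m + 2) * ((m : ℚ) + 3) * (beta 0 : ℚ) := by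
    rw [hV, hW, hX, ← Finset.sum_add_distrib,
      Finset.sum_range_succ (fun j => ((-1 : ℚ) ^ j * (beta (m + 2 - j) : ℚ)
        + (-1 : ℚ) ^ j * (j : ℚ) * (beta (m + 2 - j) : ℚ))) (m + 2)]
    have h1 : ∀ j ∈ range (m + 2), ((-1 : ℚ) ^ j * (beta (m + 2 - j) : ℚ)
        + (-1 : ℚ) ^ j * (j : ℚ) * (beta (m + 2 - j) : ℚ))
        = (-1 : ℚ) ^ j * ((j : ℚ) + 1) * (beta (m + 2 - j) : ℚ) := by
      intro j hj; ring
    rw [Finset.sum_congr rfl h1]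
    have h2 : m + 2 - (m + 2) = 0 := by omega
    rw [h2]
    push_cast
    ring
  have hVE : V = E + (-1 : ℚ) ^ (m + 2) := by
    rw [hV, Finset.sum_range_succ, Finset.sum_range_succ]
    have h1 : m + 2 - (m + 1) = 1 := by omega
    have h2 : m + 2 - (m + 2) = 0 := by omega
    rw [h1, h2, beta_one, beta_zero, ← hE]
    push_cast
    ring
  have hbeta0 : (beta 0 : ℚ) = 1 := by rw [beta_zero]; norm_num
  rw [hbeta0] at hVXW
  have hgoal1 : (m + 2 : ℕ) - 1 = m + 1 := by omega
  rw [hgoal1, ← hE]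
  have hcast : ((m + 2 : ℕ) : ℚ) = (m : ℚ) + 2 := by push_cast; ring
  rw [hcast]
  have : X = V + W - (-1 : ℚ) ^ (m + 2) * ((m : ℚ) + 3) := by linarith [hVXW]
  rw [this, hWY, hVE]
  ring

/-- For `n ≥ 4`, with `P n 1 = ∑_{k=1}^{n} |M n k|`:
`P n 1 / n! = ∑_{j=0}^{n-2} (-1)^j * beta (n - j)`, and this also equals
`∑_{j=0}^{n-1} (-1)^j * (j+1) * B (n-1-j) + (-1)^n * n`. -/
theorem matsunaga_abs_row_sum (n : ℕ) (hn : 4 ≤ n) :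
    (∑ k ∈ Finset.Icc 1 n, |(matsunaga n k : ℚ)|) / (n.factorial : ℚ) =
        ∑ j ∈ Finset.range (n - 1), (-1 : ℚ) ^ j * (beta (n - j) : ℚ) ∧
      (∑ k ∈ Finset.Icc 1 n, |(matsunaga n k : ℚ)|) / (n.factorial : ℚ) =
        (∑ j ∈ Finset.range n,
            (-1 : ℚ) ^ j * ((j : ℚ) + 1) * (bell (n - 1 - j) : ℚ))
          + (-1 : ℚ) ^ n * (n : ℚ) := by
  have hpart1 : (∑ k ∈ Finset.Icc 1 n, |(matsunaga n k : ℚ)|) / (n.factorial : ℚ) =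
      ∑ j ∈ Finset.range (n - 1), (-1 : ℚ) ^ j * (beta (n - j) : ℚ) := by
    have h1 : ∑ k ∈ Finset.Icc 1 n, |(matsunaga n k : ℚ)| = ((Tsum n : ℤ) : ℚ) := by
      have h2 : ∀ k ∈ Finset.Icc 1 n, |(matsunaga n k : ℚ)| = ((Nz n k : ℤ) : ℚ) := by
        intro k hk
        rw [Finset.mem_Icc] at hk
        rw [← abs_mats n k hn hk.1, Int.cast_abs]
      rw [Finset.sum_congr rfl h2, ← Int.cast_sum]
      congr 1
      rw [← Finset.Ico_add_one_right_eq_Icc, Finset.sum_Ico_eq_sum_range]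
      have h3 : n + 1 - 1 = n := by omega
      rw [h3, Tsum]
      exact Finset.sum_congr rfl fun i _ => by rw [Nat.add_comm 1 i]
    rw [h1, Tsum_eq n hn]
    have hfac : ((n.factorial : ℤ) : ℚ) ≠ 0 := by
      push_cast
      exact_mod_cast Nat.cast_ne_zero.2 (Nat.factorial_ne_zero n)
    rw [Int.cast_mul,
      show (((n.factorial : ℤ) : ℚ)) = (n.factorial : ℚ) by push_cast; ring,
      mul_comm, mul_div_assoc,
      div_self (by exact_mod_cast Nat.factorial_ne_zero n : (n.factorial : ℚ) ≠ 0), mul_one]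
    rw [Dz, Int.cast_sum]
    exact Finset.sum_congr rfl fun j _ => by push_cast; ring
  refine ⟨hpart1, ?_⟩
  rw [hpart1, ← EF n (by omega)]
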